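/- Let X be an A-correspondence and Y a B-correspondence, with I = ker φ_X ⊴ A and J = ker φ_Y ⊴ B. Suppose there exist an A-B correspondence R and a B-A correspondence S with X ≅ R ⊗_B S and S ⊗_A R ≅ Y (unitary correspondence isomorphisms). Then φ_R(I)R ⊆ RJ and φ_S(J)S ⊆ SI. -/

import Mathlib

/-! Basic framework: C*-correspondences over (possibly non-unital) C*-algebras,
interior tensor products (characterized by their universal properties),
closed ideals, and unitary isomorphisms of correspondences. -/

noncomputable section

/-- A (non-degenerate) A–B C*-correspondence: a right Hilbert `B`-module `X`
together with a left action of `A` by adjointable operators. -/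
structure Corr (A B : Type) [NonUnitalCStarAlgebra A] [NonUnitalCStarAlgebra B] : Type 1 where
  X : Type
  [grp : NormedAddCommGroup X]
  [nsc : NormedSpace ℂ X]
  [cpl : CompleteSpace X]
  /-- the right action of `B` -/
  sm : X → B → X
  /-- the `B`-valued inner product (linear in the second variable) -/
  ip : X → X → B
  /-- the left action of `A` -/
  φ : A → X → X
  sm_add : ∀ x y b, sm (x + y) b = sm x b + sm y b
  sm_add' : ∀ x b c, sm x (b + c) = sm x b + sm x c
  sm_mul : ∀ x b c, sm (sm x b) c = sm x (b * c)
  sm_smul : ∀ (t : ℂ) x b, sm (t • x) b = t • sm x b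
  sm_smul' : ∀ (t : ℂ) x b, sm x (t • b) = t • sm x b
  ip_add : ∀ x y z, ip x (y + z) = ip x y + ip x z
  ip_smul : ∀ (t : ℂ) x y, ip x (t • y) = t • ip x y
  ip_sm : ∀ x y b, ip x (sm y b) = ip x y * b
  ip_star : ∀ x y, star (ip x y) = ip y x
  ip_pos : ∀ x, ∃ b, ip x x = star b * b
  ip_norm : ∀ x, ‖x‖ ^ 2 = ‖ip x x‖
  φ_add : ∀ a x y, φ a (x + y) = φ a x + φ a y
  φ_add' : ∀ a b x, φ (a + b) x = φ a x + φ b x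
  φ_smul : ∀ a (t : ℂ) x, φ a (t • x) = t • φ a x
  φ_smul' : ∀ (t : ℂ) a x, φ (t • a) x = t • φ a x
  φ_mul : ∀ a b x, φ (a * b) x = φ a (φ b x)
  φ_adj : ∀ a x y, ip (φ a x) y = ip x (φ (star a) y)
  /-- non-degeneracy of the left action -/
  nondeg : closure (Submodule.span ℂ {z | ∃ a x, z = φ a x} : Set X) = Set.univ

attribute [instance] Corr.grp Corr.nsc Corr.cpl

variable {A B C : Type} [NonUnitalCStarAlgebra A] [NonUnitalCStarAlgebra B]
  [NonUnitalCStarAlgebra C]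

/-- `Z.setR I` is the closed submodule `Z·I` of `Z`. -/
def Corr.setR (Z : Corr A B) (I : Set B) : Set Z.X :=
  closure (Submodule.span ℂ {x | ∃ ξ b, b ∈ I ∧ x = Z.sm ξ b} : Set Z.X)

/-- `Z.setL I` is the closed subspace `I·Z` of `Z`. -/
def Corr.setL (Z : Corr A B) (I : Set A) : Set Z.X :=
  closure (Submodule.span ℂ {x | ∃ a ξ, a ∈ I ∧ x = Z.φ a ξ} : Set Z.X)

/-- `Z⁻¹(I) = {a ∈ A : φ_Z(a)Z ⊆ ZI}`. -/
def Corr.inv (Z : Corr A B) (I : Set B) : Set A := {a | ∀ ξ, Z.φ a ξ ∈ Z.setR I}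

/-- The closed ideal of `B` generated by the inner products of `Z`. -/
def Corr.ipSet (Z : Corr A B) : Set B :=
  closure (Submodule.span ℂ {b | ∃ x y, b = Z.ip x y} : Set B)

/-- A generalized compact operator on the underlying Hilbert module of a correspondence:
one that is approximable in operator norm by finite sums of "rank one" operators
`θ_{ξ,η} : z ↦ ξ·⟨η,z⟩`. -/
def Corr.IsCompactOp (Z : Corr A B) (f : Z.X → Z.X) : Prop :=
  ∀ ε > (0 : ℝ), ∃ (n : ℕ) (ξ η : Fin n → Z.X),
    ∀ z, ‖f z - ∑ i, Z.sm (ξ i) (Z.ip (η i) z)‖ ≤ ε * ‖z‖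

/-- A closed (two-sided, automatically self-adjoint) ideal of a C*-algebra, as a set. -/
structure IsCIdeal {B : Type} [NonUnitalCStarAlgebra B] (I : Set B) : Prop where
  isClosed : IsClosed I
  zero_mem : (0 : B) ∈ I
  add_mem : ∀ x y, x ∈ I → y ∈ I → x + y ∈ I
  smul_mem : ∀ (t : ℂ) x, x ∈ I → t • x ∈ I
  mul_left_mem : ∀ b x, x ∈ I → b * x ∈ I
  mul_right_mem : ∀ b x, x ∈ I → x * b ∈ I

/-- `t : Z₁ × Z₂ → T` exhibits `T` as the interior tensor product `Z₁ ⊗_B Z₂`. -/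
structure IsTensor (Z₁ : Corr A B) (Z₂ : Corr B C) (T : Corr A C)
    (t : Z₁.X → Z₂.X → T.X) : Prop where
  add_left : ∀ x x' y, t (x + x') y = t x y + t x' y
  add_right : ∀ x y y', t x (y + y') = t x y + t x y'
  smul_left : ∀ (c : ℂ) x y, t (c • x) y = c • t x y
  balanced : ∀ x b y, t (Z₁.sm x b) y = t x (Z₂.φ b y)
  sm_right : ∀ x y c, t x (Z₂.sm y c) = T.sm (t x y) c
  act_left : ∀ a x y, T.φ a (t x y) = t (Z₁.φ a x) y
  inner : ∀ x x' y y', T.ip (t x y) (t x' y') = Z₂.ip y (Z₂.φ (Z₁.ip x x') y')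
  dense : closure (Submodule.span ℂ {z | ∃ x y, z = t x y} : Set T.X) = Set.univ

/-- `X ≅ Z₁ ⊗ Z₂` (unitary isomorphism with the interior tensor product). -/
def IsTensorProd (Z₁ : Corr A B) (Z₂ : Corr B C) (T : Corr A C) : Prop :=
  ∃ t, IsTensor Z₁ Z₂ T t

/-- A unitary isomorphism of A–B correspondences. -/
def CorrIso (Z W : Corr A B) : Prop :=
  ∃ u : Z.X → W.X, Function.Surjective u ∧ (∀ x y, u (x + y) = u x + u y) ∧
    (∀ (c : ℂ) x, u (c • x) = c • u x) ∧ (∀ a x, u (Z.φ a x) = W.φ a (u x)) ∧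
    (∀ x b, u (Z.sm x b) = W.sm (u x) b) ∧ (∀ x y, W.ip (u x) (u y) = Z.ip x y)

end

/-! Let `a ∈ ker φ_X`, `ξ = φ_R(a) r` and `c = ⟪ξ, ξ⟫`. Since `ξ ⊗ s = φ_X(a)(r ⊗ s) = 0`, the
tensor inner product gives `⟪φ_S(c) s, φ_S(c) s⟫ = ⟪ξ ⊗ φ_S(c) s, ξ ⊗ s⟫ = 0`, so
`c ∈ ker φ_S ⊆ ker φ_Y`, the inclusion because `Y ≅ S ⊗ R` is densely spanned by the `s ⊗ r'`.
A vector whose inner square lies in the right ideal `J` lies in `RJ`. -/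

section Resolvent

variable {B : Type} [NonUnitalCStarAlgebra B] [PartialOrder B] [StarOrderedRing B]

lemma exists_smul_eq_sub_mul_of_nonneg {c : B} (hc : 0 ≤ c) {ε : ℝ} (hε : 0 < ε) :
    ∃ b : B, IsSelfAdjoint b ∧ ‖b‖ ≤ 1 ∧ ε • b = c - c * b := by
  have hσ : ∀ t ∈ quasispectrum ℝ c, 0 ≤ t := fun t ht => quasispectrum_nonneg_of_nonneg c hc t ht
  have hσε : ∀ t ∈ quasispectrum ℝ c, t + ε ≠ 0 := fun t ht => by linarith [hσ t ht]
  have hcont : ContinuousOn (fun t : ℝ => t / (t + ε)) (quasispectrum ℝ c) :=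
    continuousOn_id.div (by fun_prop) hσε
  refine ⟨cfcₙ (fun t : ℝ => t / (t + ε)) c, cfcₙ_predicate _ _, ?_, ?_⟩
  · refine norm_cfcₙ_le fun t ht => ?_
    have ht0 := hσ t ht
    rw [Real.norm_eq_abs, abs_div, abs_of_nonneg ht0, abs_of_pos (by linarith)]
    exact div_le_one_of_le₀ (by linarith) (by linarith)
  · calc ε • cfcₙ (fun t : ℝ => t / (t + ε)) c
        = cfcₙ (fun t : ℝ => t - t * (t / (t + ε))) c := by
          rw [← cfcₙ_const_mul ε _ c]
          refine cfcₙ_congr fun t ht => ?_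
          field_simp [hσε t ht]
          ring
      _ = c - c * cfcₙ (fun t : ℝ => t / (t + ε)) c := by
          rw [cfcₙ_sub _ _ c, cfcₙ_mul _ _ c, cfcₙ_id' ℝ c]

end Resolvent

namespace Corr

variable {A B : Type} [NonUnitalCStarAlgebra A] [NonUnitalCStarAlgebra B] (Z : Corr A B)

def ipₗ (x : Z.X) : Z.X →ₗ[ℂ] B where
  toFun := Z.ip x
  map_add' := Z.ip_add x
  map_smul' t := Z.ip_smul t x

def φₗ (a : A) : Z.X →ₗ[ℂ] Z.X where
  toFun := Z.φ a
  map_add' := Z.φ_add a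
  map_smul' := Z.φ_smul a

lemma ip_sub_right (x y z : Z.X) : Z.ip x (y - z) = Z.ip x y - Z.ip x z :=
  map_sub (Z.ipₗ x) y z

lemma ip_sub_left (x y z : Z.X) : Z.ip (x - y) z = Z.ip x z - Z.ip y z := by
  rw [← Z.ip_star, ip_sub_right, star_sub, Z.ip_star, Z.ip_star]

lemma ip_zero_left (x : Z.X) : Z.ip 0 x = 0 := by
  simpa using Z.ip_sub_left 0 0 x

lemma ip_sm_left (x y : Z.X) (b : B) : Z.ip (Z.sm x b) y = star b * Z.ip x y := by
  rw [← Z.ip_star, Z.ip_sm, star_mul, Z.ip_star]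

lemma eq_zero_of_ip_self_eq_zero {x : Z.X} (h : Z.ip x x = 0) : x = 0 := by
  have := Z.ip_norm x
  rw [h, norm_zero, sq_eq_zero_iff, norm_eq_zero] at this
  exact this

open MulOpposite in
/-- Cauchy–Schwarz, obtained by viewing `Z` as a Hilbert C⋆-module over `Bᵐᵒᵖ`, whose
left action and left linearity match the right action of `B`. -/
lemma norm_ip_le (x y : Z.X) : ‖Z.ip x y‖ ≤ ‖x‖ * ‖y‖ := by
  let := CStarAlgebra.spectralOrder Bᵐᵒᵖ
  have := CStarAlgebra.spectralOrderedRing Bᵐᵒᵖ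
  let : SMul Bᵐᵒᵖ Z.X := ⟨fun b x => Z.sm x b.unop⟩
  let : CStarModule Bᵐᵒᵖ Z.X :=
    { inner x y := op (Z.ip x y)
      inner_add_right {x y z} := congrArg op (Z.ip_add x y z)
      inner_self_nonneg {x} := by
        obtain ⟨b, hb⟩ := Z.ip_pos x
        simp [hb]
      inner_self {x} := ⟨fun h => Z.eq_zero_of_ip_self_eq_zero (op_injective h),
        by rintro rfl; simp [Z.ip_zero_left]⟩
      inner_op_smul_right {b x y} := congrArg op (Z.ip_sm x y b.unop)
      inner_smul_right_complex {t x y} := congrArg op (Z.ip_smul t x y)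
      star_inner x y := congrArg op (Z.ip_star x y)
      norm_eq_sqrt_norm_inner_self x := by
        rw [norm_op, ← Z.ip_norm, Real.sqrt_sq (norm_nonneg x)] }
  exact CStarModule.norm_inner_le (A := Bᵐᵒᵖ) Z.X

lemma continuous_ip (x : Z.X) : Continuous (Z.ip x) :=
  LipschitzWith.continuous (K := ‖x‖₊) <| LipschitzWith.of_dist_le_mul fun y z => by
    simpa [dist_eq_norm, ← ip_sub_right] using Z.norm_ip_le x (y - z)

def kerφ : Submodule ℂ A where
  carrier := {a | ∀ x, Z.φ a x = 0}
  add_mem' {a a'} ha ha' x := by rw [Z.φ_add', ha, ha', add_zero]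
  zero_mem' x := by simpa using Z.φ_smul' 0 0 x
  smul_mem' t a ha x := by rw [Z.φ_smul', ha, smul_zero]

lemma mul_mem_kerφ {a : A} (ha : a ∈ Z.kerφ) (a' : A) : a * a' ∈ Z.kerφ := fun x => by
  rw [Z.φ_mul]; exact ha _

/-- To see `φ a = 0` it suffices to test `⟪φ a x, φ a ·⟫ = ⟪φ (star a) (φ a x), ·⟫`, which is
continuous, on a set with dense span. -/
lemma mem_kerφ_of_dense {a : A} {M : Set Z.X} (hM : ∀ m ∈ M, Z.φ a m = 0)
    (hdense : closure (Submodule.span ℂ M : Set Z.X) = Set.univ) : a ∈ Z.kerφ := by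
  intro x
  set w := Z.φ a x
  have hspan : Submodule.span ℂ M ≤ LinearMap.ker (Z.φₗ a) := Submodule.span_le.mpr hM
  have hclosed : IsClosed {v | Z.ip (Z.φ (star a) w) v = 0} :=
    isClosed_eq (Z.continuous_ip _) continuous_const
  have hw : Z.ip (Z.φ (star a) w) x = 0 := by
    refine closure_minimal (fun v hv => ?_) hclosed (hdense ▸ Set.mem_univ x)
    have hv : Z.φ a v = 0 := hspan hv
    change Z.ip _ v = 0
    rw [Z.φ_adj, star_star, hv]
    exact map_zero (Z.ipₗ w)
  rw [Z.φ_adj, star_star] at hw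
  exact Z.eq_zero_of_ip_self_eq_zero hw

/-- If `⟪ξ, ξ⟫` lies in a right ideal `J`, then `ξ` is approximated by `ξ b` with
`b = ⟪ξ, ξ⟫ (⟪ξ, ξ⟫ + ε)⁻¹ ∈ J`, since `⟪ξ - ξ b, ξ - ξ b⟫ = ε (b - b²)`. -/
lemma mem_setR_of_ip_self_mem (J : Submodule ℂ B) (hJ : ∀ c ∈ J, ∀ b, c * b ∈ J) {ξ : Z.X}
    (hξ : Z.ip ξ ξ ∈ J) : ξ ∈ Z.setR J := by
  let := CStarAlgebra.spectralOrder B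
  have := CStarAlgebra.spectralOrderedRing B
  have hc : 0 ≤ Z.ip ξ ξ := by
    obtain ⟨d, hd⟩ := Z.ip_pos ξ
    rw [hd]
    exact star_mul_self_nonneg d
  set c := Z.ip ξ ξ
  rw [setR, Metric.mem_closure_iff]
  intro δ hδ
  set ε := δ ^ 2 / 4 with hε
  obtain ⟨b, hb_sa, hb_norm, hb⟩ := exists_smul_eq_sub_mul_of_nonneg hc (ε := ε) (by positivity)
  have hbJ : b ∈ J := by
    have hb' : b = ε⁻¹ • (c - c * b) := by
      rw [← hb, smul_smul, inv_mul_cancel₀ (by positivity), one_smul]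
    rw [hb']
    exact Submodule.smul_of_tower_mem J _ (J.sub_mem hξ (hJ c hξ b))
  have hip : Z.ip (ξ - Z.sm ξ b) (ξ - Z.sm ξ b) = ε • (b - b * b) :=
    calc Z.ip (ξ - Z.sm ξ b) (ξ - Z.sm ξ b) = (c - c * b) - b * (c - c * b) := by
          rw [Z.ip_sub_left, Z.ip_sub_right, Z.ip_sub_right, Z.ip_sm_left, Z.ip_sm_left, Z.ip_sm,
            hb_sa.star_eq]
          noncomm_ring
      _ = ε • (b - b * b) := by rw [← hb, mul_smul_comm, smul_sub]
  have hnorm : ‖ξ - Z.sm ξ b‖ ^ 2 < δ ^ 2 :=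
    calc ‖ξ - Z.sm ξ b‖ ^ 2 = ε * ‖b - b * b‖ := by
          rw [Z.ip_norm, hip, norm_smul, Real.norm_of_nonneg (by positivity)]
      _ ≤ ε * 2 := by
          gcongr
          nlinarith [norm_sub_le b (b * b), norm_mul_le b b, norm_nonneg b]
      _ < δ ^ 2 := by rw [hε]; linarith [pow_pos hδ 2]
  refine ⟨Z.sm ξ b, Submodule.subset_span ⟨ξ, b, hbJ, rfl⟩, ?_⟩
  rw [dist_eq_norm]
  exact lt_of_pow_lt_pow_left₀ 2 hδ.le hnorm

end Corr

namespace IsTensor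

variable {A B C : Type} [NonUnitalCStarAlgebra A] [NonUnitalCStarAlgebra B]
  [NonUnitalCStarAlgebra C] {Z₁ : Corr A B} {Z₂ : Corr B C} {T : Corr A C}
  {t : Z₁.X → Z₂.X → T.X}

lemma zero_left (ht : IsTensor Z₁ Z₂ T t) (y : Z₂.X) : t 0 y = 0 := by
  simpa using ht.smul_left 0 0 y

lemma kerφ_le (ht : IsTensor Z₁ Z₂ T t) : Z₁.kerφ ≤ T.kerφ := fun a ha => by
  refine T.mem_kerφ_of_dense ?_ ht.dense
  rintro _ ⟨x, y, rfl⟩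
  rw [ht.act_left, ha x, ht.zero_left]

lemma ip_self_mem_kerφ (ht : IsTensor Z₁ Z₂ T t) {x : Z₁.X} (hx : ∀ y, t x y = 0) :
    Z₁.ip x x ∈ Z₂.kerφ := fun y => by
  apply Z₂.eq_zero_of_ip_self_eq_zero
  rw [← ht.inner, hx, T.ip_zero_left]

theorem φ_mem_setR_kerφ {X : Corr A A} {Y : Corr B B} {R : Corr A B} {S : Corr B A}
    {t : R.X → S.X → X.X} {u : S.X → R.X → Y.X} (ht : IsTensor R S X t) (hu : IsTensor S R Y u)
    {a : A} (ha : a ∈ X.kerφ) (r : R.X) : R.φ a r ∈ R.setR Y.kerφ :=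
  R.mem_setR_of_ip_self_mem Y.kerφ (fun _ hc b => Y.mul_mem_kerφ hc b)
    (hu.kerφ_le (ht.ip_self_mem_kerφ fun s => by rw [← ht.act_left, ha]))

end IsTensor

/-- if `X ≅ R ⊗_B S` and `S ⊗_A R ≅ Y`, and `I = ker φ_X`, `J = ker φ_Y`,
then `φ_R(I)R ⊆ RJ` and `φ_S(J)S ⊆ SI`. -/
theorem stmt9 {A B : Type} [NonUnitalCStarAlgebra A] [NonUnitalCStarAlgebra B]
    (X : Corr A A) (Y : Corr B B) (R : Corr A B) (S : Corr B A)
    (hX : IsTensorProd R S X) (hY : IsTensorProd S R Y) :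
    (∀ a ∈ {a : A | ∀ ξ, X.φ a ξ = 0}, ∀ r, R.φ a r ∈ R.setR {b : B | ∀ η, Y.φ b η = 0}) ∧
    (∀ b ∈ {b : B | ∀ η, Y.φ b η = 0}, ∀ s, S.φ b s ∈ S.setR {a : A | ∀ ξ, X.φ a ξ = 0}) := by
  obtain ⟨t, ht⟩ := hX
  obtain ⟨u, hu⟩ := hY
  exact ⟨fun a ha r => ht.φ_mem_setR_kerφ hu ha r, fun b hb s => hu.φ_mem_setR_kerφ ht hb s⟩
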